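/- Define r_{n,k} = (k+1) p_{n,k} + 4(n-k) p_{n,k-1}, where p_{n,k} are the γ-coefficients of P_n(x) (satisfying p_{1,0}=1 and p_{n+1,k} = C(k+2,2)p_{n,k} + (k+1)(4n-4k+1)p_{n,k-1} + 4C(2n-2k+2,2)p_{n,k-2}). Then R_n(x) = (1+(2n-1)x)P_n(x) + x(1-x)P_n'(x) = Σ_{k≥0} r_{n,k} x^k (1+x)^{2n-1-2k}, so R_n is γ-positive; consequently Q_n(x) = R_n(x) + x P_n(x) is bi-γ-positive. -/

import Mathlib

/-
Inserting the largest letter into an arrangement `w` of length `m` with `d` descents: at the end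
or inside one of the `d` descents the descent number stays `d`; at the front or inside one of the
other `m - 1 - d` gaps it becomes `d + 1`. So the insertions contribute
`(d + 1) x^d + (m - d) x^(d + 1) = (1 + m x) x^d + x (1 - x) (x^d)'`, and summing over `w` gives
`Q_n = (1 + 2n x) P_n + x (1 - x) P_n' = R_n + x P_n`.

The operator `f ↦ (1 + (2n - 1) x) f + x (1 - x) f'` sends `x^k (1 + x)^(2j)` with `k + j = n - 1`
to `(k + 1) x^k (1 + x)^(2j + 1) + 4j x^(k + 1) (1 + x)^(2j - 1)`; applied to the γ-expansion of
`P_n` and reindexed, this is the expansion of `R_n` with coefficients `r_{n,k}`. These are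
nonnegative because the recurrence keeps `p_{n,k}` nonnegative and supported on `0 ≤ k < n`.
-/

open Polynomial

/-- Number of descents of a word. -/
def des (l : List ℤ) : ℕ := ((l.zip l.tail).filter (fun p => p.2 < p.1)).length

/-- Type-B descents: prepend 0. -/
def desB (l : List ℤ) : ℕ := des (0 :: l)

/-- The multiset {1,1,2,2,...,n,n} as a list. -/
def baseList (n : ℕ) : List ℤ := (List.range n).flatMap (fun i => [(i : ℤ) + 1, (i : ℤ) + 1])

/-- All distinct arrangements (multiset permutations) of a list. -/
def arrangements (l : List ℤ) : List (List ℤ) := l.permutations.dedup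

/-- Descent polynomial over arrangements of `l`. -/
noncomputable def desPoly (l : List ℤ) : Polynomial ℝ :=
  ((arrangements l).map (fun w => (X : Polynomial ℝ) ^ des w)).sum

noncomputable def Ppoly (n : ℕ) : Polynomial ℝ := desPoly (baseList n)

noncomputable def Qpoly (n : ℕ) : Polynomial ℝ := desPoly (baseList n ++ [(n : ℤ) + 1])

/-- All signings of a word. -/
def signings : List ℤ → List (List ℤ)
  | [] => [[]]
  | a :: t => (signings t).flatMap (fun w => [a :: w, (-a) :: w])

/-- All signed permutations of the multiset given by `l`. -/
def signedWords (l : List ℤ) : List (List ℤ) := (arrangements l).flatMap signings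

noncomputable def SpolyB (n : ℕ) : Polynomial ℝ :=
  ((signedWords (baseList n)).map (fun w => (X : Polynomial ℝ) ^ desB w)).sum

/-- Signed permutations of {1,1,...,n,n,n+1} in which n+1 carries a plus sign. -/
def Dwords (n : ℕ) : List (List ℤ) :=
  (signedWords (baseList n ++ [(n : ℤ) + 1])).filter (fun w => ((n : ℤ) + 1) ∈ w)

noncomputable def TpolyB (n : ℕ) : Polynomial ℝ :=
  ((Dwords n).map (fun w => (X : Polynomial ℝ) ^ desB w)).sum

def PcountZ (n : ℕ) (k : ℤ) : ℕ :=
  ((arrangements (baseList n)).filter (fun w => (des w : ℤ) = k)).length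

def QcountN (n : ℕ) (k : ℕ) : ℕ :=
  ((arrangements (baseList n ++ [(n : ℤ) + 1])).filter (fun w => des w = k)).length

def ScountZ (n : ℕ) (k : ℤ) : ℕ :=
  ((signedWords (baseList n)).filter (fun w => (desB w : ℤ) = k)).length

def TcountZ (n : ℕ) (k : ℤ) : ℕ :=
  ((Dwords n).filter (fun w => (desB w : ℤ) = k)).length

lemma X_mul_derivative_X_pow {R : Type*} [CommSemiring R] (d : ℕ) :
    X * derivative (X ^ d : R[X]) = (d : R[X]) * X ^ d := by
  cases d with
  | zero => simp
  | succ d => rw [derivative_X_pow, C_eq_natCast, Nat.add_sub_cancel]; ring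

section Arrangements

open List

lemma des_cons_cons (x y : ℤ) (l : List ℤ) :
    des (x :: y :: l) = (if y < x then 1 else 0) + des (y :: l) := by
  by_cases h : y < x <;> simp [des, h, add_comm]

section Insertion

variable {R : Type*} [CommRing R]

lemma sum_X_pow_des_cons_permutations'Aux {a : ℤ} {t : List ℤ} (ht : ∀ x ∈ t, x < a)
    {b : ℤ} (hb : b < a) :
    ((permutations'Aux a t).map fun v => (X : R[X]) ^ des (b :: v)).sum =
      ((des (b :: t) : R[X]) + 1) * X ^ des (b :: t) +
        ((t.length : R[X]) - (des (b :: t) : R[X])) * X ^ (des (b :: t) + 1) := by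
  induction t generalizing b with
  | nil => simp [des, not_lt.mpr hb.le]
  | cons c t ih =>
    have hc : c < a := ht c mem_cons_self
    have hdes : des (a :: c :: t) = des (c :: t) + 1 := by simp [des_cons_cons, hc, add_comm]
    simp only [permutations'Aux, map_cons, sum_cons, List.map_map, Function.comp_def,
      des_cons_cons b, if_neg (not_lt.mpr hb.le), pow_add, sum_map_mul_left, length_cons, hdes,
      ih (fun x hx => ht x (mem_cons_of_mem c hx)) hc]
    split_ifs <;> (push_cast; ring)

lemma sum_X_pow_des_permutations'Aux {a : ℤ} {w : List ℤ} (hw : ∀ x ∈ w, x < a) :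
    ((permutations'Aux a w).map fun v => (X : R[X]) ^ des v).sum =
      ((des w : R[X]) + 1) * X ^ des w
        + ((w.length : R[X]) - (des w : R[X])) * X ^ (des w + 1) := by
  cases w with
  | nil => simp [des]
  | cons b t =>
    have hb : b < a := hw b mem_cons_self
    have hdes : des (a :: b :: t) = des (b :: t) + 1 := by simp [des_cons_cons, hb, add_comm]
    simp only [permutations'Aux, map_cons, sum_cons, List.map_map, Function.comp_def, hdes,
      sum_X_pow_des_cons_permutations'Aux (fun x hx => hw x (mem_cons_of_mem b hx)) hb,
      length_cons]
    push_cast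
    ring

end Insertion

lemma List.erase_eq_of_mem_permutations'Aux {α : Type*} [DecidableEq α] {a : α} {w v : List α}
    (ha : a ∉ w) (hv : v ∈ permutations'Aux a w) : v.erase a = w := by
  induction w generalizing v with
  | nil => simp_all
  | cons b t ih =>
    simp only [permutations'Aux, mem_cons, mem_map] at hv
    simp only [mem_cons, not_or] at ha
    rcases hv with rfl | ⟨v', hv', rfl⟩
    · simp
    · rw [erase_cons_tail (by simpa using Ne.symm ha.1), ih ha.2 hv']

lemma List.dedup_permutations'_cons_perm {α : Type*} [DecidableEq α] {a : α} {l : List α}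
    (ha : a ∉ l) :
    (permutations' (a :: l)).dedup ~ (permutations' l).dedup.flatMap (permutations'Aux a) := by
  have hnotMem : ∀ w ∈ (permutations' l).dedup, a ∉ w := fun w hw h =>
    ha ((mem_permutations'.mp (mem_dedup.mp hw)).mem_iff.mp h)
  have hnodup : ((permutations' l).dedup.flatMap (permutations'Aux a)).Nodup := by
    refine nodup_flatMap.mpr ⟨fun w hw => nodup_permutations'Aux_of_notMem _ _ (hnotMem w hw),
      (nodup_dedup _).imp_of_mem fun hw hw' hne v hv hv' => hne ?_⟩
    rw [← erase_eq_of_mem_permutations'Aux (hnotMem _ hw) hv,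
      erase_eq_of_mem_permutations'Aux (hnotMem _ hw') hv']
  refine (perm_ext_iff_of_nodup (nodup_dedup _) hnodup).mpr fun v => ?_
  simp only [mem_dedup, permutations', mem_flatMap]

lemma arrangements_append_singleton_perm {a : ℤ} {l : List ℤ} (ha : a ∉ l) :
    arrangements (l ++ [a]) ~ (arrangements l).flatMap (permutations'Aux a) := by
  unfold arrangements
  calc (l ++ [a]).permutations.dedup
      ~ (permutations' (a :: l)).dedup :=
        ((perm_append_singleton a l).permutations.trans (permutations_perm_permutations' _)).dedup
    _ ~ (permutations' l).dedup.flatMap (permutations'Aux a) := dedup_permutations'_cons_perm ha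
    _ ~ l.permutations.dedup.flatMap (permutations'Aux a) :=
        (permutations_perm_permutations' l).symm.dedup.flatMap_right _

lemma desPoly_append_singleton {a : ℤ} {l : List ℤ} (ha : ∀ x ∈ l, x < a) :
    desPoly (l ++ [a]) =
      (1 + (l.length : ℝ[X]) * X) * desPoly l + X * (1 - X) * derivative (desPoly l) := by
  have hinsert : ∀ w ∈ arrangements l,
      ((permutations'Aux a w).map fun v => (X : ℝ[X]) ^ des v).sum =
        (1 + (l.length : ℝ[X]) * X) * X ^ des w + X * (1 - X) * derivative (X ^ des w) := by
    intro w hw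
    have hwl : w ~ l := mem_permutations.mp (mem_dedup.mp hw)
    rw [sum_X_pow_des_permutations'Aux fun x hx => ha x (hwl.mem_iff.mp hx), hwl.length_eq,
      mul_assoc X, mul_left_comm X, X_mul_derivative_X_pow]
    ring
  rw [desPoly, ((arrangements_append_singleton_perm fun h => (ha a h).false).map _).sum_eq]
  simp only [List.flatMap, map_flatten, sum_flatten, List.map_map, Function.comp_def]
  rw [map_congr_left hinsert, sum_map_add, sum_map_mul_left, sum_map_mul_left, desPoly,
    map_list_sum, List.map_map]
  rfl

lemma length_baseList (n : ℕ) : (baseList n).length = 2 * n := by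
  simp [baseList, length_flatMap, mul_comm]

lemma lt_of_mem_baseList {n : ℕ} {x : ℤ} (hx : x ∈ baseList n) : x < n + 1 := by
  obtain ⟨i, hi, rfl⟩ : ∃ i < n, x = i + 1 := by simpa [baseList] using hx
  omega

end Arrangements

lemma Qpoly_eq (n : ℕ) :
    Qpoly n = ((1 + (2 * (n : ℝ[X]) - 1) * X) * Ppoly n
        + X * (1 - X) * derivative (Ppoly n)) + X * Ppoly n := by
  rw [Qpoly, desPoly_append_singleton fun _ => lt_of_mem_baseList, length_baseList, Ppoly]
  push_cast
  ring

section GammaExpansion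

open Finset

variable {R : Type*} [CommRing R]

lemma gammaBasis_transform (k j : ℕ) :
    (1 + (2 * ((k + j + 1 : ℕ) : R[X]) - 1) * X) * (X ^ k * (1 + X) ^ (2 * j))
        + X * (1 - X) * derivative (X ^ k * (1 + X) ^ (2 * j)) =
      ((k : R[X]) + 1) * X ^ k * (1 + X) ^ (2 * j + 1)
        + 4 * (j : R[X]) * X ^ (k + 1) * (1 + X) ^ (2 * j - 1) := by
  have hXk := X_mul_derivative_X_pow (R := R) k
  rw [derivative_mul]
  cases j with
  | zero =>
    simp only [mul_zero, pow_zero, derivative_one]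
    push_cast
    linear_combination (1 - X) * hXk
  | succ j =>
    have hD : derivative ((1 + X : R[X]) ^ (2 * (j + 1))) =
        2 * ((j : R[X]) + 1) * (1 + X) ^ (2 * j + 1) := by
      rw [derivative_pow, derivative_add, derivative_one, derivative_X, C_eq_natCast,
        show 2 * (j + 1) - 1 = 2 * j + 1 by omega]
      push_cast
      ring
    rw [hD, show 2 * (j + 1) = 2 * j + 1 + 1 by ring, show 2 * j + 1 + 1 - 1 = 2 * j + 1 by omega]
    push_cast
    linear_combination (1 - X) * (1 + X) ^ (2 * j + 2) * hXk

lemma gammaExpansion_transform (c : ℤ → R) (hc : c (-1) = 0) (n : ℕ) :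
    (1 + (2 * (n : R[X]) - 1) * X)
          * (∑ k ∈ range n, C (c k) * X ^ k * (1 + X) ^ (2 * n - 2 - 2 * k))
        + X * (1 - X)
          * derivative (∑ k ∈ range n, C (c k) * X ^ k * (1 + X) ^ (2 * n - 2 - 2 * k)) =
      ∑ k ∈ range n, C ((k + 1) * c k + 4 * (n - k) * c (k - 1)) * X ^ k
        * (1 + X) ^ (2 * n - 1 - 2 * k) := by
  rcases n with _ | m
  · simp
  have hterm : ∀ k ∈ range (m + 1),
      (1 + (2 * ((m + 1 : ℕ) : R[X]) - 1) * X)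
          * (C (c k) * X ^ k * (1 + X) ^ (2 * (m + 1) - 2 - 2 * k))
        + X * (1 - X) * derivative (C (c k) * X ^ k * (1 + X) ^ (2 * (m + 1) - 2 - 2 * k)) =
      C ((k + 1) * c k) * X ^ k * (1 + X) ^ (2 * (m + 1) - 1 - 2 * k)
        + C (4 * (m - k) * c k) * X ^ (k + 1) * (1 + X) ^ (2 * (m - k) - 1) := by
    intro k hk
    have hkm : k ≤ m := Nat.lt_succ_iff.mp (mem_range.mp hk)
    have hbasis := gammaBasis_transform (R := R) k (m - k)
    rw [Nat.cast_sub hkm, Nat.add_sub_cancel' hkm] at hbasis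
    rw [show 2 * (m + 1) - 2 - 2 * k = 2 * (m - k) by omega,
      show 2 * (m + 1) - 1 - 2 * k = 2 * (m - k) + 1 by omega,
      mul_assoc (C _), derivative_C_mul]
    simp only [map_mul, map_add, map_sub, map_natCast, map_one, map_ofNat]
    linear_combination C (c k) * hbasis
  have hshift :
      ∑ k ∈ range (m + 1), C (4 * (m - k) * c k) * X ^ (k + 1) * (1 + X) ^ (2 * (m - k) - 1) =
        ∑ k ∈ range (m + 1), C (4 * ((m + 1 : ℕ) - k) * c (k - 1)) * X ^ k
          * (1 + X) ^ (2 * (m + 1) - 1 - 2 * k) := by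
    rw [sum_range_succ, sum_range_succ']
    simp only [sub_self, mul_zero, zero_mul, map_zero, add_zero, CharP.cast_eq_zero, zero_sub, hc]
    refine sum_congr rfl fun k _ => ?_
    rw [show 2 * (m + 1) - 1 - 2 * (k + 1) = 2 * (m - k) - 1 by omega]
    push_cast
    rw [add_sub_cancel_right, add_sub_add_right_eq_sub]
  rw [map_sum, mul_sum, mul_sum, ← sum_add_distrib, sum_congr rfl hterm, sum_add_distrib, hshift,
    ← sum_add_distrib]
  refine sum_congr rfl fun k _ => ?_
  rw [map_add]
  ring

end GammaExpansion

def GammaRecurrence (p : ℕ → ℤ → ℝ) : Prop :=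
  ∀ n : ℕ, 1 ≤ n → ∀ k : ℤ,
    p (n + 1) k = ((k : ℝ) + 2) * ((k : ℝ) + 1) / 2 * p n k
      + ((k : ℝ) + 1) * (4 * (n : ℝ) - 4 * (k : ℝ) + 1) * p n (k - 1)
      + 4 * ((2 * (n : ℝ) - 2 * (k : ℝ) + 2) * (2 * (n : ℝ) - 2 * (k : ℝ) + 1) / 2)
          * p n (k - 2)

section GammaRecurrence

variable {p : ℕ → ℤ → ℝ}

lemma GammaRecurrence.eq_zero (hprec : GammaRecurrence p) (hp1 : ∀ k : ℤ, k ≠ 0 → p 1 k = 0)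
    {n : ℕ} (hn : 1 ≤ n) {k : ℤ} (hk : k < 0 ∨ n ≤ k) : p n k = 0 := by
  induction n, hn using Nat.le_induction generalizing k with
  | base => exact hp1 k (by omega)
  | succ n hn ih =>
    rw [hprec n hn k]
    rcases hk with hk | hk
    · simp [ih (.inl hk), ih (.inl (by omega : k - 1 < 0)), ih (.inl (by omega : k - 2 < 0))]
    rw [ih (.inr (by omega)), ih (.inr (by omega : (n : ℤ) ≤ k - 1))]
    rcases (by omega : k = n + 1 ∨ (n : ℤ) ≤ k - 2) with rfl | hk2
    · push_cast; ring
    · rw [ih (.inr hk2)]; ring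

lemma GammaRecurrence.nonneg (hprec : GammaRecurrence p) (hp10 : p 1 0 = 1)
    (hp1 : ∀ k : ℤ, k ≠ 0 → p 1 k = 0) {n : ℕ} (hn : 1 ≤ n) (k : ℤ) :
    0 ≤ p n k := by
  induction n, hn using Nat.le_induction generalizing k with
  | base => by_cases hk : k = 0 <;> simp [hk, hp10, hp1]
  | succ n hn ih =>
    have hterm : ∀ (j : ℤ) (a : ℝ), (0 ≤ j → j < n → 0 ≤ a) → 0 ≤ a * p n j := by
      intro j a ha
      by_cases hj : 0 ≤ j ∧ j < n
      · exact mul_nonneg (ha hj.1 hj.2) (ih j)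
      · rw [hprec.eq_zero hp1 hn (by omega), mul_zero]
    rw [hprec n hn k]
    refine add_nonneg (add_nonneg (hterm _ _ fun hk _ => ?_) (hterm _ _ fun hk hkn => ?_))
      (hterm _ _ fun _ hlt => ?_)
    · have : (0 : ℝ) ≤ k := by exact_mod_cast hk
      positivity
    · have : (1 : ℝ) ≤ k := by exact_mod_cast (by omega : 1 ≤ k)
      have : (k : ℝ) ≤ n := by exact_mod_cast (by omega : k ≤ n)
      nlinarith
    · rcases (by omega : k = n + 1 ∨ k ≤ n) with rfl | hkn
      · push_cast
        rw [show 2 * (n : ℝ) - 2 * (n + 1) + 2 = 0 by ring]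
        simp
      · have : (k : ℝ) ≤ n := by exact_mod_cast hkn
        nlinarith

end GammaRecurrence

lemma shiftedGammaCoeff_nonneg {c : ℤ → ℝ} {n : ℕ} (hsupp : ∀ k : ℤ, n ≤ k → c k = 0)
    (hnonneg : ∀ k, 0 ≤ c k) {k : ℤ} (hk : 0 ≤ k) :
    0 ≤ ((k : ℝ) + 1) * c k + 4 * ((n : ℝ) - k) * c (k - 1) := by
  by_cases hkn : k ≤ n
  · have : (0 : ℝ) ≤ k := by exact_mod_cast hk
    have : (k : ℝ) ≤ n := by exact_mod_cast hkn
    exact add_nonneg (mul_nonneg (by linarith) (hnonneg k))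
      (mul_nonneg (by linarith) (hnonneg (k - 1)))
  · simp [hsupp k (by omega), hsupp (k - 1) (by omega)]

/-- With p_{n,k} the γ-coefficients of Pₙ(x) (given by their recurrence), the numbers
r_{n,k} = (k+1)p_{n,k} + 4(n-k)p_{n,k-1} are nonnegative and
Rₙ(x) = (1+(2n-1)x)Pₙ(x) + x(1-x)Pₙ'(x) = Σ_k r_{n,k} x^k (1+x)^{2n-1-2k},
so Rₙ is γ-positive; consequently Qₙ(x) = Rₙ(x) + x Pₙ(x) is bi-γ-positive. -/
theorem stmt16 (p : ℕ → ℤ → ℝ)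
    (hp10 : p 1 0 = 1) (hp1 : ∀ k : ℤ, k ≠ 0 → p 1 k = 0)
    (hprec : ∀ n : ℕ, 1 ≤ n → ∀ k : ℤ,
      p (n + 1) k = ((k : ℝ) + 2) * ((k : ℝ) + 1) / 2 * p n k
        + ((k : ℝ) + 1) * (4 * (n : ℝ) - 4 * (k : ℝ) + 1) * p n (k - 1)
        + 4 * ((2 * (n : ℝ) - 2 * (k : ℝ) + 2) * (2 * (n : ℝ) - 2 * (k : ℝ) + 1) / 2)
            * p n (k - 2))
    (hgamma : ∀ n : ℕ, 1 ≤ n →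
      Ppoly n = ∑ k ∈ Finset.range n, C (p n k) * X ^ k * (1 + X) ^ (2 * n - 2 - 2 * k)) :
    ∀ n : ℕ, 1 ≤ n →
      (∀ k : ℤ, 0 ≤ k →
        0 ≤ ((k : ℝ) + 1) * p n k + 4 * ((n : ℝ) - (k : ℝ)) * p n (k - 1)) ∧
      (1 + (2 * (n : Polynomial ℝ) - 1) * X) * Ppoly n
          + X * (1 - X) * derivative (Ppoly n) =
        ∑ k ∈ Finset.range n,
          C (((k : ℝ) + 1) * p n k + 4 * ((n : ℝ) - (k : ℝ)) * p n (k - 1))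
            * X ^ k * (1 + X) ^ (2 * n - 1 - 2 * k) ∧
      Qpoly n = ((1 + (2 * (n : Polynomial ℝ) - 1) * X) * Ppoly n
          + X * (1 - X) * derivative (Ppoly n)) + X * Ppoly n := by
  intro n hn
  have hzero : ∀ k : ℤ, k < 0 ∨ n ≤ k → p n k = 0 := fun _ =>
    GammaRecurrence.eq_zero hprec hp1 hn
  refine ⟨fun k => shiftedGammaCoeff_nonneg (fun k hk => hzero k (.inr hk))
      (GammaRecurrence.nonneg hprec hp10 hp1 hn), ?_, Qpoly_eq n⟩
  rw [hgamma n hn]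
  exact gammaExpansion_transform (p n) (hzero (-1) (.inl (by norm_num))) n
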